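/- The function p_t is everywhere positive and differentiable on ℝ^d, and its log-gradient satisfies ∇ log p_t(x) = −(∫ φ_σ(x − x₀) e^{−E(x₀)} ∇E(x₀) dx₀) / (∫ φ_σ(x − x₀) e^{−E(x₀)} dx₀) for every x ∈ ℝ^d; that is, the score of the Gaussian-smoothed Boltzmann density equals the ratio of the Gaussian expectation of ∇(e^{−E}) to the Gaussian expectation of e^{−E}. -/

import Mathlib

/-!
After the substitution `x₀ = x - u` the unnormalised density is `∫ φ(u) e^{-E(x-u)} du`, whose
integrand is differentiable in `x` with derivative dominated by the integrable function
`e^{-E_min} M φ(u)`, so one may differentiate under the integral sign; substituting back gives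
the numerator of the score. Positivity of `φ` and `e^{-E}` makes `p_t` positive, and the chain rule
for `log` divides by the denominator, the constant `Z` cancelling.
-/

open MeasureTheory Real InnerProductSpace Gradient

theorem integral_pos_of_forall_pos {α : Type*} [MeasurableSpace α] {μ : Measure α} [NeZero μ]
    {f : α → ℝ} (hf : Integrable f μ) (hpos : ∀ x, 0 < f x) : 0 < ∫ x, f x ∂μ := by
  rw [integral_pos_iff_support_of_nonneg (fun x => (hpos x).le) hf,
    Function.support_eq_univ fun x => (hpos x).ne']
  exact NeZero.pos _

theorem abs_exp_neg_le_exp_neg_of_le {a b : ℝ} (h : a ≤ b) : |rexp (-b)| ≤ rexp (-a) := by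
  rw [abs_of_pos (exp_pos _)]
  exact exp_le_exp.2 (neg_le_neg h)

section Gradient

variable {V : Type*} [NormedAddCommGroup V] [InnerProductSpace ℝ V] [CompleteSpace V]
  {f : V → ℝ} {f' x : V}

theorem HasDerivAt.comp_hasGradientAt {g : ℝ → ℝ} {g' : ℝ} (hg : HasDerivAt g g' (f x))
    (hf : HasGradientAt f f' x) : HasGradientAt (g ∘ f) (g' • f') x := by
  rw [hasGradientAt_iff_hasFDerivAt, map_smul]
  exact hg.comp_hasFDerivAt x hf.hasFDerivAt

theorem HasGradientAt.const_mul (hf : HasGradientAt f f' x) (c : ℝ) :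
    HasGradientAt (fun y => c * f y) (c • f') x := by
  rw [hasGradientAt_iff_hasFDerivAt, map_smul]
  exact hf.hasFDerivAt.const_mul c

end Gradient

section Gaussian

variable {V : Type*} [NormedAddCommGroup V] [InnerProductSpace ℝ V] [FiniteDimensional ℝ V]
  [MeasurableSpace V] [BorelSpace V]

theorem integrable_exp_neg_mul_sq_norm {b : ℝ} (hb : 0 < b) :
    Integrable fun v : V => rexp (-b * ‖v‖ ^ 2) := by
  have h := (GaussianFourier.integrable_cexp_neg_mul_sq_norm_add (V := V)
    (b := (b : ℂ)) (by simpa using hb) 0 0).norm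
  refine h.congr (Filter.Eventually.of_forall fun v => ?_)
  simp only [Complex.norm_exp]
  norm_cast
  simp

end Gaussian

section Smoothing

variable {V : Type*} [NormedAddCommGroup V] [NormedSpace ℝ V] [FiniteDimensional ℝ V]
  [MeasurableSpace V] [BorelSpace V] {μ : Measure V} [μ.IsAddHaarMeasure]
  {k F : V → ℝ} {C C' : ℝ}

theorem integrable_comp_sub_mul_of_bounded (hk : Integrable k μ) (hF : Continuous F)
    (hFb : ∀ x, |F x| ≤ C) (x : V) :
    Integrable (fun x₀ => k (x - x₀) * F x₀) μ :=
  (hk.comp_sub_left x).mul_bdd hF.aestronglyMeasurable (Filter.Eventually.of_forall hFb)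

theorem hasFDerivAt_integral_comp_sub_mul (hk : Integrable k μ) (hF : Differentiable ℝ F)
    (hFb : ∀ x, |F x| ≤ C) (hF'b : ∀ x, ‖fderiv ℝ F x‖ ≤ C') (x : V) :
    HasFDerivAt (fun y => ∫ x₀, k (y - x₀) * F x₀ ∂μ)
      (∫ x₀, k (x - x₀) • fderiv ℝ F x₀ ∂μ) x := by
  have hFc := hF.continuous
  have hshift : (fun y => ∫ x₀, k (y - x₀) * F x₀ ∂μ) = fun y => ∫ u, k u * F (y - u) ∂μ :=
    funext fun y => by simpa using (integral_sub_left_eq_self (fun u => k u * F (y - u)) μ y)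
  have hshift' : ∫ x₀, k (x - x₀) • fderiv ℝ F x₀ ∂μ = ∫ u, k u • fderiv ℝ F (x - u) ∂μ := by
    simpa using (integral_sub_left_eq_self (fun u => k u • fderiv ℝ F (x - u)) μ x)
  rw [hshift, hshift']
  refine hasFDerivAt_integral_of_dominated_of_fderiv_le (𝕜 := ℝ) (s := Set.univ)
    (F := fun y u => k u * F (y - u)) (F' := fun y u => k u • fderiv ℝ F (y - u))
    (bound := fun u => |k u| * C') Filter.univ_mem ?_ ?_ ?_ ?_ (hk.abs.mul_const C') ?_
  · exact Filter.Eventually.of_forall fun y =>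
      hk.aestronglyMeasurable.mul (hFc.comp (continuous_sub_left y)).aestronglyMeasurable
  · exact hk.mul_bdd (hFc.comp (continuous_sub_left x)).aestronglyMeasurable
      (Filter.Eventually.of_forall fun u => hFb (x - u))
  · exact hk.aestronglyMeasurable.smul
      ((measurable_fderiv ℝ F).comp (measurable_const_sub x)).aestronglyMeasurable
  · refine Filter.Eventually.of_forall fun u y _ => ?_
    rw [norm_smul, Real.norm_eq_abs]
    exact mul_le_mul_of_nonneg_left (hF'b _) (abs_nonneg _)
  · exact Filter.Eventually.of_forall fun u y _ =>
      ((hF (y - u)).hasFDerivAt.comp y ((hasFDerivAt_id y).sub_const u)).const_mul (k u)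

end Smoothing

section SmoothingGradient

variable {V : Type*} [NormedAddCommGroup V] [InnerProductSpace ℝ V] [FiniteDimensional ℝ V]
  [MeasurableSpace V] [BorelSpace V] {μ : Measure V} [μ.IsAddHaarMeasure]
  {k F : V → ℝ} {C C' : ℝ}

theorem hasGradientAt_integral_comp_sub_mul (hk : Integrable k μ) (hF : Differentiable ℝ F)
    (hFb : ∀ x, |F x| ≤ C) (hF'b : ∀ x, ‖∇ F x‖ ≤ C') (x : V) :
    HasGradientAt (fun y => ∫ x₀, k (y - x₀) * F x₀ ∂μ) (∫ x₀, k (x - x₀) • ∇ F x₀ ∂μ) x := by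
  have hF'b' : ∀ x, ‖fderiv ℝ F x‖ ≤ C' := fun x => by
    rw [← toDual_gradient, LinearIsometryEquiv.norm_map]
    exact hF'b x
  rw [hasGradientAt_iff_hasFDerivAt, ← LinearIsometryEquiv.coe_toLinearIsometry,
    ← LinearIsometry.integral_comp_comm]
  simp_rw [LinearIsometryEquiv.coe_toLinearIsometry, map_smul, toDual_gradient]
  exact hasFDerivAt_integral_comp_sub_mul hk hF hFb hF'b' x

theorem hasGradientAt_integral_comp_sub_mul_exp_neg {E : V → ℝ} {Emin M : ℝ}
    (hk : Integrable k μ) (hE : Differentiable ℝ E) (hEmin : ∀ x, Emin ≤ E x)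
    (hM : ∀ x, ‖∇ E x‖ ≤ M) (x : V) :
    HasGradientAt (fun y => ∫ x₀, k (y - x₀) * rexp (-E x₀) ∂μ)
      (-∫ x₀, (k (x - x₀) * rexp (-E x₀)) • ∇ E x₀ ∂μ) x := by
  have hgrad : ∀ y, HasGradientAt (fun y => rexp (-E y)) (-rexp (-E y) • ∇ E y) y := fun y => by
    simpa [Function.comp_def] using
      ((Real.hasDerivAt_exp _).comp _ (hasDerivAt_neg (E y))).comp_hasGradientAt
        (hE y).hasGradientAt
  have hbound : ∀ y, |rexp (-E y)| ≤ rexp (-Emin) := fun y =>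
    abs_exp_neg_le_exp_neg_of_le (hEmin y)
  have hgrad_bound : ∀ y, ‖∇ (fun y => rexp (-E y)) y‖ ≤ rexp (-Emin) * M := fun y => by
    rw [(hgrad y).gradient, norm_smul, norm_neg, Real.norm_eq_abs]
    exact mul_le_mul (hbound y) (hM y) (norm_nonneg _) (exp_pos _).le
  have h := hasGradientAt_integral_comp_sub_mul (μ := μ) hk
    (fun y => (hgrad y).differentiableAt) hbound hgrad_bound x
  simp_rw [(hgrad _).gradient, neg_smul, smul_neg, smul_smul, integral_neg] at h
  exact h

end SmoothingGradient

theorem stmt_7_general (d : ℕ) (E : EuclideanSpace ℝ (Fin d) → ℝ)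
    (Emin M : ℝ) (hE : Differentiable ℝ E) (hEmin : ∀ x, Emin ≤ E x)
    (hM : ∀ x, ‖gradient E x‖ ≤ M)
    (hZpos : 0 < ∫ x, Real.exp (-(E x)))
    (σ : ℝ) (hσ : 0 < σ) :
    let φ : EuclideanSpace ℝ (Fin d) → ℝ :=
      fun u => (2 * Real.pi * σ ^ 2) ^ (-(d : ℝ) / 2) * Real.exp (-‖u‖ ^ 2 / (2 * σ ^ 2))
    let Z : ℝ := ∫ x, Real.exp (-(E x))
    let pt : EuclideanSpace ℝ (Fin d) → ℝ :=
      fun x => Z⁻¹ * ∫ x₀, φ (x - x₀) * Real.exp (-(E x₀))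
    (∀ x, 0 < pt x) ∧ Differentiable ℝ pt ∧
      ∀ x, gradient (fun y => Real.log (pt y)) x =
        -((∫ x₀, φ (x - x₀) * Real.exp (-(E x₀)))⁻¹ •
          ∫ x₀, (φ (x - x₀) * Real.exp (-(E x₀))) • gradient E x₀) := by
  intro φ Z pt
  have hφ_int : Integrable φ := by
    refine ((integrable_exp_neg_mul_sq_norm (b := (2 * σ ^ 2)⁻¹) (by positivity)).const_mul
      ((2 * π * σ ^ 2) ^ (-(d : ℝ) / 2))).congr (.of_forall fun u => ?_)
    simp only [φ, neg_mul, neg_div, inv_mul_eq_div]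
  have hφ_pos : ∀ u, 0 < φ u := fun u => by positivity
  have hconv_pos : ∀ x, 0 < ∫ x₀, φ (x - x₀) * rexp (-E x₀) := fun x =>
    integral_pos_of_forall_pos
      (integrable_comp_sub_mul_of_bounded hφ_int (continuous_exp.comp hE.continuous.neg)
        (fun y => abs_exp_neg_le_exp_neg_of_le (hEmin y)) x)
      (fun x₀ => mul_pos (hφ_pos _) (exp_pos _))
  have hpt_pos : ∀ x, 0 < pt x := fun x => mul_pos (inv_pos.2 hZpos) (hconv_pos x)
  have hpt_grad : ∀ x, HasGradientAt pt
      (Z⁻¹ • -∫ x₀, (φ (x - x₀) * rexp (-E x₀)) • ∇ E x₀) x := fun x =>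
    (hasGradientAt_integral_comp_sub_mul_exp_neg hφ_int hE hEmin hM x).const_mul Z⁻¹
  refine ⟨hpt_pos, fun x => (hpt_grad x).differentiableAt, fun x => ?_⟩
  refine ((Real.hasDerivAt_log (hpt_pos x).ne').comp_hasGradientAt (hpt_grad x)).gradient.trans ?_
  rw [smul_smul, smul_neg]
  congr 2
  simp only [pt]
  field_simp [show Z ≠ 0 from hZpos.ne', (hconv_pos x).ne']

/-- The Gaussian-smoothed Boltzmann density `p_t` is positive and differentiable, and its
log-gradient (score) is the ratio of the Gaussian expectation of `∇(e^{-E})` to the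
Gaussian expectation of `e^{-E}`. -/
theorem stmt_7 (d : ℕ) (hd : 1 ≤ d) (E : EuclideanSpace ℝ (Fin d) → ℝ)
    (Emin M : ℝ) (hE : Differentiable ℝ E) (hEmin : ∀ x, Emin ≤ E x)
    (hM : ∀ x, ‖gradient E x‖ ≤ M)
    (hZfin : Integrable fun x => Real.exp (-(E x)))
    (hZpos : 0 < ∫ x, Real.exp (-(E x)))
    (σ : ℝ) (hσ : 0 < σ) :
    let φ : EuclideanSpace ℝ (Fin d) → ℝ :=
      fun u => (2 * Real.pi * σ ^ 2) ^ (-(d : ℝ) / 2) * Real.exp (-‖u‖ ^ 2 / (2 * σ ^ 2))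
    let Z : ℝ := ∫ x, Real.exp (-(E x))
    let pt : EuclideanSpace ℝ (Fin d) → ℝ :=
      fun x => Z⁻¹ * ∫ x₀, φ (x - x₀) * Real.exp (-(E x₀))
    (∀ x, 0 < pt x) ∧ Differentiable ℝ pt ∧
      ∀ x, gradient (fun y => Real.log (pt y)) x =
        -((∫ x₀, φ (x - x₀) * Real.exp (-(E x₀)))⁻¹ •
          ∫ x₀, (φ (x - x₀) * Real.exp (-(E x₀))) • gradient E x₀) :=
  stmt_7_general d E Emin M hE hEmin hM hZpos σ hσ
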